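/- Let S ∈ S_d(U, Y) with de Branges-Rovnyak space H(K_S), let C : H(K_S) → Y be evaluation at 0 (Cf = f(0)), D = S(0) : U → Y, and suppose A = (A_1,...,A_d) : H(K_S) → H(K_S)^d solves the Gleason problem f(z) - f(0) = Σ_j z_j (A_j f)(z) for all f ∈ H(K_S), and B = (B_1,...,B_d) : U → H(K_S)^d solves S(z)u - S(0)u = Σ_j z_j (B_j u)(z) for all u ∈ U. Then S(z) = D + C (I - Z(z)A)^{-1} Z(z) B for all z ∈ B^d for which I - Z(z)A is invertible. -/

import Mathlib

open scoped ENNReal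
set_option synthInstance.maxHeartbeats 400000
set_option maxHeartbeats 1000000

instance PiLp.instCompleteSpace' {p : ℝ≥0∞} {ι : Type*} {β : ι → Type*}
    [∀ i, UniformSpace (β i)] [∀ i, CompleteSpace (β i)] : CompleteSpace (PiLp p β) :=
  (PiLp.uniformEquiv p β).completeSpace_iff.2 (Pi.complete β)

/-- The row operator Z(z) : X^d → X. -/
noncomputable def rowOp {X : Type*} [NormedAddCommGroup X] [NormedSpace ℂ X]
    {d : ℕ} (z : EuclideanSpace ℂ (Fin d)) : PiLp 2 (fun _ : Fin d => X) →L[ℂ] X :=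
  ∑ j : Fin d, z j • ((ContinuousLinearMap.proj j : (∀ _ : Fin d, X) →L[ℂ] X).comp
      (PiLp.continuousLinearEquiv 2 ℂ (fun _ : Fin d => X)).toContinuousLinearMap)

/-!
Evaluating the Gleason identity for `A` at `z` says `ev z ∘ (I - Z(z)A) = ev 0 = C`, so
`C (I - Z(z)A)⁻¹ = ev z`; the Gleason identity for `B` says `S(z) - S(0) = ev z ∘ Z(z)B`.
-/

section RowOperator

variable {X W Y : Type*} [NormedAddCommGroup X] [NormedSpace ℂ X]
  [NormedAddCommGroup W] [NormedSpace ℂ W] [NormedAddCommGroup Y] [NormedSpace ℂ Y]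
  {d : ℕ}

theorem rowOp_apply (z : EuclideanSpace ℂ (Fin d)) (v : PiLp 2 (fun _ : Fin d => X)) :
    rowOp z v = ∑ j, z j • v j := by
  simp [rowOp]

theorem comp_rowOp_comp_apply (z : EuclideanSpace ℂ (Fin d)) (E : X →L[ℂ] Y)
    (M : W →L[ℂ] PiLp 2 (fun _ : Fin d => X)) (w : W) :
    ((E.comp (rowOp z)).comp M) w = ∑ j, z j • E (M w j) := by
  simp only [ContinuousLinearMap.comp_apply, rowOp_apply, map_sum, map_smul]

theorem comp_one_sub_rowOp_comp_eq {z : EuclideanSpace ℂ (Fin d)} {E C : X →L[ℂ] Y}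
    {A : X →L[ℂ] PiLp 2 (fun _ : Fin d => X)}
    (hA : ∀ f, E f - C f = ∑ j, z j • E (A f j)) :
    E.comp (1 - (rowOp z).comp A) = C := by
  ext f
  rw [ContinuousLinearMap.comp_sub, ContinuousLinearMap.one_def, ContinuousLinearMap.comp_id,
    ← ContinuousLinearMap.comp_assoc, sub_apply, comp_rowOp_comp_apply, ← hA, sub_sub_cancel]

theorem eq_add_comp_rowOp_comp {z : EuclideanSpace ℂ (Fin d)} {E : X →L[ℂ] Y}
    {F D : W →L[ℂ] Y} {B : W →L[ℂ] PiLp 2 (fun _ : Fin d => X)}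
    (hB : ∀ u, F u - D u = ∑ j, z j • E (B u j)) :
    F = D + (E.comp (rowOp z)).comp B := by
  ext u
  rw [add_apply, comp_rowOp_comp_apply, ← hB, add_sub_cancel]

end RowOperator

theorem ContinuousLinearMap.comp_inverse_eq_of_comp_eq {R X Y : Type*} [Semiring R]
    [TopologicalSpace X] [AddCommMonoid X] [Module R X]
    [TopologicalSpace Y] [AddCommMonoid Y] [Module R Y]
    {E C : X →L[R] Y} {T : X →L[R] X} (hT : IsUnit T) (h : E.comp T = C) :
    C.comp (Ring.inverse T) = E := by
  rw [← h, ContinuousLinearMap.comp_assoc, ← ContinuousLinearMap.mul_def,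
    Ring.mul_inverse_cancel T hT, ContinuousLinearMap.one_def, ContinuousLinearMap.comp_id]

theorem gleason_solutions_give_realization_general
    {G Y H : Type*}
    [NormedAddCommGroup G] [InnerProductSpace ℂ G]
    [NormedAddCommGroup Y] [InnerProductSpace ℂ Y]
    [NormedAddCommGroup H] [InnerProductSpace ℂ H]
    {d : ℕ}
    (S : EuclideanSpace ℂ (Fin d) → G →L[ℂ] Y)
    (ev : EuclideanSpace ℂ (Fin d) → H →L[ℂ] Y)
    (A : H →L[ℂ] PiLp 2 (fun _ : Fin d => H))
    (B : G →L[ℂ] PiLp 2 (fun _ : Fin d => H))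
    (C : H →L[ℂ] Y) (D : G →L[ℂ] Y)
    (hC : C = ev 0) (hD : D = S 0)
    (hGleasonA : ∀ (f : H) (z : EuclideanSpace ℂ (Fin d)), ‖z‖ < 1 →
      ev z f - ev 0 f = ∑ j, z j • ev z ((A f) j))
    (hGleasonB : ∀ (u : G) (z : EuclideanSpace ℂ (Fin d)), ‖z‖ < 1 →
      S z u - S 0 u = ∑ j, z j • ev z ((B u) j)) :
    ∀ z : EuclideanSpace ℂ (Fin d), ‖z‖ < 1 →
      IsUnit ((1 : H →L[ℂ] H) - (rowOp z).comp A) →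
      S z = D + ((C.comp (Ring.inverse (1 - (rowOp z).comp A))).comp (rowOp z)).comp B := by
  intro z hz hunit
  subst hC hD
  have hevA : (ev z).comp (1 - (rowOp z).comp A) = ev 0 :=
    comp_one_sub_rowOp_comp_eq fun f => hGleasonA f z hz
  rw [ContinuousLinearMap.comp_inverse_eq_of_comp_eq hunit hevA]
  exact eq_add_comp_rowOp_comp fun u => hGleasonB u z hz

/-- if A solves the Gleason problem for H(K_S), B solves the Gleason
problem for S, C is evaluation at 0 and D = S(0), then
S(z) = D + C(I - Z(z)A)⁻¹Z(z)B wherever I - Z(z)A is invertible.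
The de Branges-Rovnyak space H(K_S) is axiomatized by a kernel-section map k and an
evaluation map ev with the reproducing property and the kernel identity for K_S. -/
theorem gleason_solutions_give_realization
    {G Y H : Type*}
    [NormedAddCommGroup G] [InnerProductSpace ℂ G] [CompleteSpace G]
    [NormedAddCommGroup Y] [InnerProductSpace ℂ Y] [CompleteSpace Y]
    [NormedAddCommGroup H] [InnerProductSpace ℂ H] [CompleteSpace H]
    {d : ℕ} (hd : 1 ≤ d)
    (S : EuclideanSpace ℂ (Fin d) → G →L[ℂ] Y)
    (k : EuclideanSpace ℂ (Fin d) → Y →L[ℂ] H)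
    (ev : EuclideanSpace ℂ (Fin d) → H →L[ℂ] Y)
    (hrep : ∀ ζ : EuclideanSpace ℂ (Fin d), ‖ζ‖ < 1 → ∀ (y : Y) (f : H),
      (inner ℂ (k ζ y) f : ℂ) = (inner ℂ y (ev ζ f) : ℂ))
    (hker : ∀ z ζ : EuclideanSpace ℂ (Fin d), ‖z‖ < 1 → ‖ζ‖ < 1 →
      (1 - ∑ j, z j * (starRingEnd ℂ) (ζ j)) • ((ev z).comp (k ζ))
        = 1 - (S z).comp (ContinuousLinearMap.adjoint (S ζ)))
    (A : H →L[ℂ] PiLp 2 (fun _ : Fin d => H))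
    (B : G →L[ℂ] PiLp 2 (fun _ : Fin d => H))
    (C : H →L[ℂ] Y) (D : G →L[ℂ] Y)
    (hC : C = ev 0) (hD : D = S 0)
    (hGleasonA : ∀ (f : H) (z : EuclideanSpace ℂ (Fin d)), ‖z‖ < 1 →
      ev z f - ev 0 f = ∑ j, z j • ev z ((A f) j))
    (hGleasonB : ∀ (u : G) (z : EuclideanSpace ℂ (Fin d)), ‖z‖ < 1 →
      S z u - S 0 u = ∑ j, z j • ev z ((B u) j)) :
    ∀ z : EuclideanSpace ℂ (Fin d), ‖z‖ < 1 →
      IsUnit ((1 : H →L[ℂ] H) - (rowOp z).comp A) →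
      S z = D + ((C.comp (Ring.inverse (1 - (rowOp z).comp A))).comp (rowOp z)).comp B :=
  gleason_solutions_give_realization_general S ev A B C D hC hD hGleasonA hGleasonB
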